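/- Let L be a distributive lattice, and consider the four-term chain complex C(L) with differential ∂ = a∂^◁ + b∂^∨ + c∂^∧ + d∂^▷ on ℤL^{n+1}. If L has a bottom ⊥ and top ⊤ and t ∈ L, then the reduced homology Hₙ(L, t) is annihilated by gcd(a+b, a+c) for all n. -/

import Mathlib

/-- The `i`-th face map on tuples, for a binary operation `⋆`. -/
def dFun {X : Type*} (op : X → X → X) (n : ℕ) (i : Fin (n+1)) (x : Fin (n+1) → X) :
    Fin n → X :=
  fun j => if (j : ℕ) < (i : ℕ) then op (x j.castSucc) (x i) else x j.succ

/-- The chain group `Cₙ = ℤ L^{n+1}`. -/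
abbrev CC (X : Type*) (n : ℕ) := (Fin (n+1) → X) →₀ ℤ

/-- The four-term boundary `∂ = a∂^◁ + b∂^∨ + c∂^∧ + d∂^▷ : Cₙ₊₁ → Cₙ`
of a lattice. -/
noncomputable def bdLat {L : Type*} [Lattice L] (a b c d : ℤ) (n : ℕ) :
    CC L (n+1) →ₗ[ℤ] CC L n :=
  ∑ i : Fin (n+2),
    ((((-1 : ℤ) ^ (i : ℕ)) * a) • Finsupp.lmapDomain ℤ ℤ (dFun (fun x _ => x) (n+1) i) +
     (((-1 : ℤ) ^ (i : ℕ)) * b) • Finsupp.lmapDomain ℤ ℤ (dFun (· ⊔ ·) (n+1) i) +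
     (((-1 : ℤ) ^ (i : ℕ)) * c) • Finsupp.lmapDomain ℤ ℤ (dFun (· ⊓ ·) (n+1) i) +
     (((-1 : ℤ) ^ (i : ℕ)) * d) • Finsupp.lmapDomain ℤ ℤ (dFun (fun _ y => y) (n+1) i))

/-- The subcomplex `C({t})` spanned by the constant tuples at `t`. -/
noncomputable def Tsub {L : Type*} (t : L) (n : ℕ) : Submodule ℤ (CC L n) :=
  Submodule.span ℤ {Finsupp.single (fun _ : Fin (n+1) => t) (1 : ℤ)}

/-- The relative cycles of the reduced complex `C(L,t) = C(L)/C({t})`: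
in degree `n+1` the chains whose boundary lies in `C({t})`, in degree `0` everything. -/
noncomputable def Zrel {L : Type*} [Lattice L] (a b c d : ℤ) (t : L) :
    (n : ℕ) → Submodule ℤ (CC L n)
  | 0 => ⊤
  | n+1 => Submodule.comap (bdLat a b c d n) (Tsub t n)

/-- The `n`-th reduced homology `Hₙ(L,t)`, i.e. the `n`-th homology of the
quotient complex `C(L)/C({t})`: relative cycles modulo `C({t}) + im ∂`. -/
noncomputable abbrev Hrel {L : Type*} [Lattice L] (a b c d : ℤ) (t : L) (n : ℕ) :=
  Zrel a b c d t n ⧸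
    Submodule.comap (Zrel a b c d t n).subtype
      (Tsub t n ⊔ LinearMap.range (bdLat a b c d n))

/-! Appending a fixed last entry, `h_z(x₀,…,xₙ) = (x₀,…,xₙ,z)`, commutes with all face maps but
the last, which sends `(x,z)` to `x ◁ z`, `x ∨ z`, `x ∧ z` or `x ▷ z`. Writing `κ_z` for the map
sending every tuple to the constant tuple at `z`, this gives
`∂h_z - h_z∂ = ±(a + b(· ∨ z) + c(· ∧ z) + d κ_z)` (in degree 0 up to a multiple of `κ_z`), that is
`±((a+b) + (c+d) κ_⊥)` for `z = ⊥` and `±((a+c) + (b+d) κ_⊤)` for `z = ⊤`. A relative cycle `v` is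
`κ_t v ∈ C({t})` plus the cycle `w = v - κ_t v`, which `κ_⊥` and `κ_⊤` kill; so `(a+b)w` and
`(a+c)w` are boundaries, and by Bézout so is `gcd(a+b, a+c)·w`. -/

theorem Submodule.gcd_smul_mem {M : Type*} [AddCommGroup M] {S : Submodule ℤ M} {x y : ℤ}
    {v : M} (hx : x • v ∈ S) (hy : y • v ∈ S) : (Int.gcd x y : ℤ) • v ∈ S := by
  rw [Int.gcd_eq_gcd_ab, add_smul, mul_comm, mul_smul, mul_comm, mul_smul]
  exact add_mem (S.smul_mem _ hx) (S.smul_mem _ hy)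

section FaceMaps

variable {L : Type*}

theorem dFun_snoc_castSucc (op : L → L → L) (n : ℕ) (i : Fin (n+1)) (y : Fin (n+1) → L)
    (z : L) : dFun op (n+1) i.castSucc (Fin.snoc y z) = Fin.snoc (dFun op n i y) z := by
  funext j
  refine Fin.lastCases ?_ (fun j => ?_) j
  · simp [dFun, Fin.succ_last, not_lt.mpr (Fin.is_le i)]
  · by_cases hj : (j : ℕ) < i
    · simp [dFun, hj]
    · simp [dFun, hj, -Fin.castSucc_succ, Fin.succ_castSucc]

theorem dFun_snoc_last (op : L → L → L) (n : ℕ) (y : Fin (n+1) → L) (z : L) :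
    dFun op (n+1) (Fin.last (n+1)) (Fin.snoc y z) = fun j => op (y j) z := by
  funext j
  simp [dFun, j.isLt]

theorem dFun_const (op : L → L → L) {t : L} (hop : op t t = t) (n : ℕ) (i : Fin (n+1)) :
    dFun op n i (fun _ => t) = fun _ => t := by
  funext j
  simp [dFun, hop]

end FaceMaps

section ChainMaps

variable {L : Type*}

noncomputable def faceSum (op : L → L → L) (n : ℕ) : CC L (n+1) →ₗ[ℤ] CC L n :=
  ∑ i : Fin (n+2), ((-1 : ℤ) ^ (i : ℕ)) • Finsupp.lmapDomain ℤ ℤ (dFun op (n+1) i)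

noncomputable def snocChain (z : L) (n : ℕ) : CC L n →ₗ[ℤ] CC L (n+1) :=
  Finsupp.lmapDomain ℤ ℤ (Fin.snoc · z)

noncomputable def mapEntries (f : L → L) (n : ℕ) : CC L n →ₗ[ℤ] CC L n :=
  Finsupp.lmapDomain ℤ ℤ (f ∘ ·)

theorem mapEntries_id (n : ℕ) : mapEntries (fun x : L => x) n = LinearMap.id :=
  Finsupp.lmapDomain_id ℤ ℤ

theorem mapEntries_mapEntries (f g : L → L) (n : ℕ) (v : CC L n) :
    mapEntries f n (mapEntries g n v) = mapEntries (f ∘ g) n v :=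
  (Finsupp.mapDomain_comp).symm

theorem faceSum_succ_comp_snocChain (op : L → L → L) (z : L) (n : ℕ) :
    faceSum op (n+1) ∘ₗ snocChain z (n+1) =
      snocChain z n ∘ₗ faceSum op n + (-1 : ℤ) ^ n • mapEntries (fun x => op x z) (n+1) := by
  refine LinearMap.ext fun v => ?_
  simp only [faceSum, snocChain, mapEntries, LinearMap.comp_apply, LinearMap.sum_apply,
    LinearMap.add_apply, LinearMap.smul_apply, map_sum, map_smul, Finsupp.lmapDomain_apply,
    ← Finsupp.mapDomain_comp, Fin.sum_univ_castSucc (n := n + 2)]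
  congr 1
  · refine Finset.sum_congr rfl fun i _ => ?_
    congr 2
    funext y
    exact dFun_snoc_castSucc op (n+1) i y z
  · rw [Fin.val_last, pow_add, neg_one_sq, mul_one]
    congr 2
    funext y
    exact dFun_snoc_last op (n+1) y z

theorem faceSum_zero_comp_snocChain (op : L → L → L) (z : L) :
    faceSum op 0 ∘ₗ snocChain z 0 =
      mapEntries (fun _ => z) 0 - mapEntries (fun x => op x z) 0 := by
  have h0 : dFun op 1 0 ∘ (Fin.snoc · z) = fun y : Fin 1 → L => (fun _ => z) ∘ y := by
    funext y j
    simp [dFun, Fin.snoc]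
  have h1 : dFun op 1 1 ∘ (Fin.snoc · z) = fun y : Fin 1 → L => (fun x => op x z) ∘ y := by
    funext y j
    simp [dFun, Fin.snoc]
  rw [faceSum, Fin.sum_univ_two]
  simp only [snocChain, mapEntries, LinearMap.add_comp, LinearMap.smul_comp,
    ← Finsupp.lmapDomain_comp, h0, h1]
  simp [sub_eq_add_neg]

theorem faceSum_comp_mapEntries_const (op : L → L → L) {t : L} (hop : op t t = t) (n : ℕ) :
    faceSum op n ∘ₗ mapEntries (fun _ => t) (n+1) = mapEntries (fun _ => t) n ∘ₗ faceSum op n := by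
  refine LinearMap.ext fun v => ?_
  simp only [faceSum, mapEntries, LinearMap.comp_apply, LinearMap.sum_apply,
    LinearMap.smul_apply, map_sum, map_smul, Finsupp.lmapDomain_apply, ← Finsupp.mapDomain_comp]
  refine Finset.sum_congr rfl fun i _ => ?_
  congr 2
  funext y
  exact dFun_const op hop (n+1) i

theorem mapEntries_const_mem_Tsub (t : L) (n : ℕ) (v : CC L n) :
    mapEntries (fun _ => t) n v ∈ Tsub t n := by
  induction v using Finsupp.induction_linear with
  | zero => simp
  | add f g hf hg => simpa using add_mem hf hg
  | single y r =>
    have : mapEntries (fun _ => t) n (Finsupp.single y r) =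
        r • Finsupp.single (fun _ : Fin (n+1) => t) 1 := by
      simp [mapEntries, Finsupp.smul_single, Function.comp_def]
    rw [this]
    exact Submodule.smul_mem _ _ (Submodule.mem_span_singleton_self _)

theorem mapEntries_const_of_mem_Tsub {t : L} {n : ℕ} {w : CC L n} (hw : w ∈ Tsub t n) :
    mapEntries (fun _ => t) n w = w := by
  obtain ⟨r, rfl⟩ := Submodule.mem_span_singleton.mp hw
  simp [mapEntries, Function.comp_def]

end ChainMaps

section Homotopy

variable {L : Type*} [Lattice L]

theorem bdLat_eq_faceSum (a b c d : ℤ) (n : ℕ) :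
    bdLat a b c d n = a • faceSum (fun x _ : L => x) n + b • faceSum (· ⊔ ·) n +
      c • faceSum (· ⊓ ·) n + d • faceSum (fun _ y => y) n := by
  simp only [bdLat, faceSum, Finset.smul_sum, ← Finset.sum_add_distrib, smul_smul, mul_comm]

noncomputable def homotopyDefect (a b c d : ℤ) (z : L) (n : ℕ) : CC L n →ₗ[ℤ] CC L n :=
  a • LinearMap.id + b • mapEntries (· ⊔ z) n + c • mapEntries (· ⊓ z) n +
    d • mapEntries (fun _ => z) n

theorem bdLat_succ_comp_snocChain (a b c d : ℤ) (z : L) (n : ℕ) :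
    bdLat a b c d (n+1) ∘ₗ snocChain z (n+1) =
      snocChain z n ∘ₗ bdLat a b c d n + (-1 : ℤ) ^ n • homotopyDefect a b c d z (n+1) := by
  simp only [bdLat_eq_faceSum, homotopyDefect, LinearMap.add_comp, LinearMap.comp_add,
    LinearMap.smul_comp, LinearMap.comp_smul, faceSum_succ_comp_snocChain, mapEntries_id]
  module

theorem bdLat_zero_comp_snocChain (a b c d : ℤ) (z : L) :
    bdLat a b c d 0 ∘ₗ snocChain z 0 =
      (a + b + c + d) • mapEntries (fun _ => z) 0 - homotopyDefect a b c d z 0 := by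
  simp only [bdLat_eq_faceSum, homotopyDefect, LinearMap.add_comp, LinearMap.smul_comp,
    faceSum_zero_comp_snocChain, mapEntries_id]
  module

theorem homotopyDefect_bot [OrderBot L] (a b c d : ℤ) (n : ℕ) :
    homotopyDefect a b c d (⊥ : L) n =
      (a + b) • LinearMap.id + (c + d) • mapEntries (fun _ => ⊥) n := by
  simp only [homotopyDefect, sup_bot_eq, inf_bot_eq, mapEntries_id]
  module

theorem homotopyDefect_top [OrderTop L] (a b c d : ℤ) (n : ℕ) :
    homotopyDefect a b c d (⊤ : L) n =
      (a + c) • LinearMap.id + (b + d) • mapEntries (fun _ => ⊤) n := by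
  simp only [homotopyDefect, sup_top_eq, inf_top_eq, mapEntries_id]
  module

theorem bdLat_comp_mapEntries_const (a b c d : ℤ) (t : L) (n : ℕ) :
    bdLat a b c d n ∘ₗ mapEntries (fun _ => t) (n+1) =
      mapEntries (fun _ => t) n ∘ₗ bdLat a b c d n := by
  simp only [bdLat_eq_faceSum, LinearMap.add_comp, LinearMap.comp_add, LinearMap.smul_comp,
    LinearMap.comp_smul]
  rw [faceSum_comp_mapEntries_const (fun x _ => x) rfl,
    faceSum_comp_mapEntries_const (· ⊔ ·) (sup_idem t),
    faceSum_comp_mapEntries_const (· ⊓ ·) (inf_idem t),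
    faceSum_comp_mapEntries_const (fun _ y => y) rfl]

end Homotopy

section Annihilation

variable {L : Type*} [Lattice L]

theorem bdLat_sub_mapEntries_const_eq_zero {a b c d : ℤ} {t : L} {n : ℕ} {v : CC L (n+1)}
    (hv : v ∈ Zrel a b c d t (n+1)) :
    bdLat a b c d n (v - mapEntries (fun _ => t) (n+1) v) = 0 := by
  have hcomm := LinearMap.congr_fun (bdLat_comp_mapEntries_const a b c d t n) v
  rw [LinearMap.comp_apply, LinearMap.comp_apply] at hcomm
  rw [map_sub, hcomm, mapEntries_const_of_mem_Tsub hv, sub_self]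

theorem smul_mem_Tsub_sup_range {a b c d e e' : ℤ} {z : L}
    (hz : ∀ n, homotopyDefect a b c d z n = e • LinearMap.id + e' • mapEntries (fun _ => z) n)
    {t : L} {n : ℕ} {v : CC L n} (hv : v ∈ Zrel a b c d t n) :
    e • v ∈ Tsub t n ⊔ LinearMap.range (bdLat a b c d n) := by
  set w := v - mapEntries (fun _ => t) n v with hw
  have hzw : mapEntries (fun _ => z) n w = 0 := by
    rw [hw, map_sub, mapEntries_mapEntries]
    exact sub_self _
  suffices hew : e • w ∈ LinearMap.range (bdLat a b c d n) by
    rw [show e • v = e • mapEntries (fun _ => t) n v + e • w by rw [hw]; module]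
    exact add_mem
      (Submodule.mem_sup_left (Submodule.smul_mem _ _ (mapEntries_const_mem_Tsub t n v)))
      (Submodule.mem_sup_right hew)
  cases n with
  | zero =>
    refine ⟨-snocChain z 0 w, ?_⟩
    have h := LinearMap.congr_fun (bdLat_zero_comp_snocChain a b c d z) w
    simp only [LinearMap.comp_apply, LinearMap.sub_apply, LinearMap.smul_apply, hz,
      LinearMap.add_apply, LinearMap.id_apply, hzw] at h
    rw [map_neg, h]
    module
  | succ n =>
    refine ⟨(-1 : ℤ) ^ n • snocChain z (n+1) w, ?_⟩
    have hbw : bdLat a b c d n w = 0 := bdLat_sub_mapEntries_const_eq_zero hv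
    have h := LinearMap.congr_fun (bdLat_succ_comp_snocChain a b c d z n) w
    simp only [LinearMap.comp_apply, LinearMap.add_apply, LinearMap.smul_apply, hz,
      LinearMap.id_apply, hzw, hbw, map_zero, smul_zero, add_zero, zero_add] at h
    rw [map_smul, h, smul_smul, ← mul_pow, neg_mul_neg, one_mul, one_pow, one_smul]

end Annihilation

/-- for a distributive lattice `L` with bottom and top and `t ∈ L`,
the reduced four-term homology `Hₙ(L,t)` is annihilated by `gcd(a+b, a+c)`. -/
theorem reduced_homology_annihilated {L : Type*} [DistribLattice L]
    [OrderBot L] [OrderTop L] (a b c d : ℤ) (t : L) :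
    ∀ (n : ℕ) (x : Hrel a b c d t n), ((Int.gcd (a + b) (a + c) : ℤ)) • x = 0 := by
  intro n x
  obtain ⟨v, rfl⟩ := Submodule.Quotient.mk_surjective _ x
  rw [← Submodule.Quotient.mk_smul, Submodule.Quotient.mk_eq_zero]
  exact Submodule.gcd_smul_mem
    (smul_mem_Tsub_sup_range (homotopyDefect_bot a b c d) v.2)
    (smul_mem_Tsub_sup_range (homotopyDefect_top a b c d) v.2)
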